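/- There exists a real constant c̄ > 4·τ̃^{−2/N} such that for every real d ≥ 0 one has Λ(d) ≤ 1 + (4/τ̃)·d + c̄·d², where τ̃ = 2(N−1)/(N−2). -/

import Mathlib

/-!
Put `s = d + √(d² + 1) ≥ 1`. Near `d = 0` write `s = 1 + u` with `u ≤ d + d²/2`; the bound
`(1 + u)^n ≤ exp (n u) ≤ 1 + n u + (n u)²` and Bernoulli's inequality
`x^(2/n) ≤ 1 + (2/n)(x - 1)` give the linear coefficient `Λ'(0) = 4/τ̃` up to a quadratic
error. Away from `0` the crude bound `Λ(d) ≤ s² ≤ (1 + 2d)²` suffices, since there `d` is dominated by a multiple of `d²`.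
-/

open Real

lemma one_le_sqrt_sq_add_one (d : ℝ) : 1 ≤ √(d ^ 2 + 1) :=
  one_le_sqrt.mpr (by nlinarith [sq_nonneg d])

lemma sqrt_sq_add_one_le_one_add {d : ℝ} (hd : 0 ≤ d) : √(d ^ 2 + 1) ≤ 1 + d :=
  sqrt_le_iff.mpr ⟨by linarith, by nlinarith⟩

lemma sqrt_sq_add_one_le_one_add_sq_div_two (d : ℝ) : √(d ^ 2 + 1) ≤ 1 + d ^ 2 / 2 :=
  sqrt_le_iff.mpr ⟨by positivity, by nlinarith [sq_nonneg d]⟩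

lemma one_add_pow_le (n : ℕ) {u : ℝ} (hu : 0 ≤ u) (hnu : n * u ≤ 1) :
    (1 + u) ^ n ≤ 1 + n * u + (n * u) ^ 2 := by
  have hexp : exp (n * u) - 1 - n * u ≤ (n * u) ^ 2 :=
    (le_abs_self _).trans <| abs_exp_sub_one_sub_id_le <|
      abs_le.mpr ⟨by linarith [mul_nonneg (Nat.cast_nonneg n) hu], hnu⟩
  calc (1 + u) ^ n ≤ exp u ^ n :=
        pow_le_pow_left₀ (by linarith) (by linarith [add_one_le_exp u]) n
    _ = exp (n * u) := (exp_nat_mul u n).symm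
    _ ≤ 1 + n * u + (n * u) ^ 2 := by linarith

lemma one_add_pow_mean_le {m n : ℕ} (hmn : m ≤ n) {a u : ℝ} (ha : 0 ≤ a) (hu : 0 ≤ u)
    (hnu : n * u ≤ 1) :
    ((1 + u) ^ n + a * (1 + u) ^ m) / (1 + a) ≤
      1 + ((n + a * m) * u + (n ^ 2 + a * m ^ 2) * u ^ 2) / (1 + a) := by
  have hmn' : (m : ℝ) ≤ n := by exact_mod_cast hmn
  have hmu : m * u ≤ 1 := by nlinarith
  have hn := one_add_pow_le n hu hnu
  have hm := mul_le_mul_of_nonneg_left (one_add_pow_le m hu hmu) ha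
  rw [div_le_iff₀ (by linarith), add_mul, div_mul_cancel₀ _ (by linarith)]
  linear_combination hn + hm

lemma rpow_two_div_le_one_add {n : ℕ} (hn : 2 ≤ n) {x : ℝ} (hx : 0 ≤ x) :
    x ^ (2 / n : ℝ) ≤ 1 + 2 / n * (x - 1) := by
  have hn' : (2 : ℝ) ≤ n := by exact_mod_cast hn
  have h := rpow_one_add_le_one_add_mul_self (s := x - 1) (by linarith) (p := 2 / n)
    (by positivity) ((div_le_one (by positivity)).mpr hn')
  rwa [add_sub_cancel] at h

/-- With `n = N`, `m = N - 2` and `a = 2*/2` this is the paper's `Λ`, as `1 + 2*/2 = τ̃`. -/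
noncomputable def normalizedNehariEnergy (n m : ℕ) (a d : ℝ) : ℝ :=
  (((d + √(d ^ 2 + 1)) ^ n + a * (d + √(d ^ 2 + 1)) ^ m) / (1 + a)) ^ (2 / n : ℝ)

section NormalizedNehariEnergy

variable {n m : ℕ} {a d : ℝ}

lemma normalizedNehariEnergy_le_sq (hn : n ≠ 0) (hmn : m ≤ n) (ha : 0 ≤ a) (hd : 0 ≤ d) :
    normalizedNehariEnergy n m a d ≤ (d + √(d ^ 2 + 1)) ^ 2 := by
  set s := d + √(d ^ 2 + 1)
  have hs : 1 ≤ s := by linarith [one_le_sqrt_sq_add_one d]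
  have hmean : (s ^ n + a * s ^ m) / (1 + a) ≤ s ^ n := by
    rw [div_le_iff₀ (by linarith)]
    nlinarith [mul_le_mul_of_nonneg_left (pow_le_pow_right₀ hs hmn) ha]
  calc normalizedNehariEnergy n m a d ≤ (s ^ n) ^ (2 / n : ℝ) :=
        rpow_le_rpow (by positivity) hmean (by positivity)
    _ = s ^ 2 := by
        rw [← rpow_natCast_mul (by positivity), mul_div_cancel₀ _ (by exact_mod_cast hn)]
        exact_mod_cast rpow_natCast s 2

lemma normalizedNehariEnergy_le_of_le (hn : 2 ≤ n) (hmn : m ≤ n) (ha : 0 ≤ a) (hd : 0 ≤ d)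
    (hdn : d ≤ 1 / (2 * n)) :
    normalizedNehariEnergy n m a d ≤
      1 + 2 * (n + a * m) / (n * (1 + a)) * d + (1 + 8 * n) * d ^ 2 := by
  have hmn' : (m : ℝ) ≤ n := by exact_mod_cast hmn
  set u := d + √(d ^ 2 + 1) - 1
  have hu : 0 ≤ u := by linarith [one_le_sqrt_sq_add_one d]
  have hu_lin : u ≤ 2 * d := by linarith [sqrt_sq_add_one_le_one_add hd]
  have hu_quad : u ≤ d + d ^ 2 / 2 := by linarith [sqrt_sq_add_one_le_one_add_sq_div_two d]
  have hnu : n * u ≤ 1 := by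
    rw [le_div_iff₀ (by positivity)] at hdn
    nlinarith
  set x := ((1 + u) ^ n + a * (1 + u) ^ m) / (1 + a)
  have hx : normalizedNehariEnergy n m a d = x ^ (2 / n : ℝ) := by
    simp only [normalizedNehariEnergy, x, u, add_sub_cancel]
  have hbernoulli := rpow_two_div_le_one_add hn (show 0 ≤ x by positivity)
  set L := 2 * (n + a * m) / (n * (1 + a))
  set K := 2 * (n ^ 2 + a * m ^ 2) / (n * (1 + a))
  have hx_sub : 2 / n * (x - 1) ≤ L * u + K * u ^ 2 := by
    calc 2 / n * (x - 1)
        ≤ 2 / n * (((n + a * m) * u + (n ^ 2 + a * m ^ 2) * u ^ 2) / (1 + a)) := by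
          gcongr
          linarith [one_add_pow_mean_le hmn ha hu hnu]
      _ = L * u + K * u ^ 2 := by
          simp only [L, K]
          field_simp
  have hL : 0 ≤ L ∧ L ≤ 2 := ⟨by positivity, by
    rw [div_le_iff₀ (by positivity)]; nlinarith [mul_le_mul_of_nonneg_left hmn' ha]⟩
  have hK : 0 ≤ K ∧ K ≤ 2 * n := ⟨by positivity, by
    rw [div_le_iff₀ (by positivity)]
    nlinarith [mul_le_mul_of_nonneg_left (pow_le_pow_left₀ (Nat.cast_nonneg m) hmn' 2) ha]⟩
  have hLu : L * u ≤ L * d + d ^ 2 := by nlinarith [mul_le_mul_of_nonneg_left hu_quad hL.1]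
  have hKu : K * u ^ 2 ≤ 8 * n * d ^ 2 := by
    have hu2 : u ^ 2 ≤ 4 * d ^ 2 := by nlinarith
    nlinarith [mul_le_mul_of_nonneg_left hu2 hK.1, mul_le_mul_of_nonneg_right hK.2 (sq_nonneg d)]
  rw [hx]
  linarith

theorem normalizedNehariEnergy_le (hn : 2 ≤ n) (hmn : m ≤ n) (ha : 0 ≤ a) (hd : 0 ≤ d) :
    normalizedNehariEnergy n m a d ≤
      1 + 2 * (n + a * m) / (n * (1 + a)) * d + (4 + 8 * n) * d ^ 2 := by
  have hL : 0 ≤ 2 * (n + a * m) / (n * (1 + a)) := by positivity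
  rcases le_or_gt d (1 / (2 * n)) with hsmall | hlarge
  · nlinarith [normalizedNehariEnergy_le_of_le hn hmn ha hd hsmall]
  · have hd_large : 1 ≤ 2 * n * d := ((div_lt_iff₀' (by positivity)).mp hlarge).le
    have hs : d + √(d ^ 2 + 1) ≤ 1 + 2 * d := by linarith [sqrt_sq_add_one_le_one_add hd]
    have hs_sq : (d + √(d ^ 2 + 1)) ^ 2 ≤ (1 + 2 * d) ^ 2 :=
      pow_le_pow_left₀ (by positivity) hs 2
    nlinarith [normalizedNehariEnergy_le_sq (by omega) hmn ha hd,
      mul_le_mul_of_nonneg_left hd_large (by positivity : (0 : ℝ) ≤ 4 * d), mul_nonneg hL hd]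

end NormalizedNehariEnergy

theorem stmt_3 (N : ℕ) (hN : 5 ≤ N) :
    let τ : ℝ := 2 * ((N : ℝ) - 1) / ((N : ℝ) - 2)
    let Λ : ℝ → ℝ := fun d =>
      τ ^ (-(2 / (N : ℝ))) *
        ((d + Real.sqrt (d ^ 2 + 1)) ^ (N : ℝ)
          + ((2 * (N : ℝ) / ((N : ℝ) - 2)) / 2) * (d + Real.sqrt (d ^ 2 + 1)) ^ ((N : ℝ) - 2))
          ^ (2 / (N : ℝ))
    ∃ cbar : ℝ, 4 * τ ^ (-(2 / (N : ℝ))) < cbar ∧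
      ∀ d : ℝ, 0 ≤ d → Λ d ≤ 1 + (4 / τ) * d + cbar * d ^ 2 := by
  intro τ Λ
  have hN' : (5 : ℝ) ≤ N := by exact_mod_cast hN
  have hcast : ((N - 2 : ℕ) : ℝ) = N - 2 := by rw [Nat.cast_sub (by omega)]; norm_num
  have hN2 : (N : ℝ) - 2 ≠ 0 := by linarith
  set a : ℝ := N / (N - 2)
  have ha : 0 ≤ a := div_nonneg (by positivity) (by linarith)
  have hτ : τ = 1 + a := by simp only [τ, a]; field_simp; ring
  have hΛ (d : ℝ) (hd : 0 ≤ d) : Λ d = normalizedNehariEnergy N (N - 2) a d := by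
    rw [normalizedNehariEnergy, ← hτ, div_rpow (by positivity) (by linarith), div_eq_inv_mul,
      ← rpow_neg (by linarith), ← rpow_natCast, ← rpow_natCast _ (N - 2), hcast]
    simp only [Λ, a]
    ring_nf
  have hlin : 2 * (N + a * (N - 2 : ℕ)) / (N * (1 + a)) = 4 / τ := by
    rw [hτ, hcast]; simp only [a]; field_simp; ring
  refine ⟨4 + 8 * N, ?_, fun d hd => ?_⟩
  · have h : τ ^ (-(2 / (N : ℝ))) ≤ 1 :=
      rpow_le_one_of_one_le_of_nonpos (by linarith)
        (by simp only [Left.neg_nonpos_iff]; positivity)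
    linarith
  · rw [hΛ d hd, ← hlin]
    exact normalizedNehariEnergy_le (by omega) (Nat.sub_le N 2) ha hd
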